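/- Let (G, ω) be a filling of a finite pseudo-metric space (M, ρ) and let π be any tour of G. Then ω(G) ≥ p(M, ρ, π), the half-perimeter of (M, ρ) with respect to π. Consequently mf(M, ρ) ≥ p(M, ρ), the half-perimeter of the space. -/

import Mathlib

open SimpleGraph Finset

structure IsPseudoMetric {M : Type} (ρ : M → M → ℝ) : Prop where
  nonneg : ∀ p q, 0 ≤ ρ p q
  refl : ∀ p, ρ p p = 0
  symm : ∀ p q, ρ p q = ρ q p
  triangle : ∀ p q r, ρ p r ≤ ρ p q + ρ q r

/-- A tree joining a finite set `M`: a finite tree `G = (V, E)` with an injection `ι : M → V`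
such that every vertex of degree 1 or 2 lies in the image of `M`. -/
structure Frame (M : Type) where
  V : Type
  [fin : Fintype V]
  [deq : DecidableEq V]
  G : SimpleGraph V
  [dec : DecidableRel G.Adj]
  tree : G.IsTree
  ι : M → V
  inj : Function.Injective ι
  joins : ∀ v : V, G.degree v = 1 ∨ G.degree v = 2 → v ∈ Set.range ι

attribute [instance] Frame.fin Frame.deq Frame.dec

namespace Frame

variable {M : Type}

/-- The unique path between two vertices of the tree. -/
noncomputable def path (F : Frame M) (u v : F.V) : F.G.Walk u v :=
  (F.tree.existsUnique_path u v).exists.choose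

/-- `d_ω(u,v)`: the sum of the weights of the edges of the unique path from `u` to `v`. -/
noncomputable def dist (F : Frame M) (w : Sym2 F.V → ℝ) (u v : F.V) : ℝ :=
  ((F.path u v).edges.map w).sum

/-- `ω(G)`: the total weight of all edges of the tree. -/
noncomputable def weight (F : Frame M) (w : Sym2 F.V → ℝ) : ℝ :=
  ∑ e ∈ F.G.edgeFinset, w e

/-- `(G, ω)` is a filling of `(M, ρ)`: nonnegative weights and `ρ p q ≤ d_ω(ι p, ι q)`. -/
def IsFilling (F : Frame M) (w : Sym2 F.V → ℝ) (ρ : M → M → ℝ) : Prop :=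
  (∀ e ∈ F.G.edgeFinset, 0 ≤ w e) ∧
  ∀ p q : M, ρ p q ≤ F.dist w (F.ι p) (F.ι q)

end Frame

/-- `mf(M,ρ)`: the infimum of weights of fillings of `(M, ρ)`. -/
noncomputable def mf {M : Type} (ρ : M → M → ℝ) : ℝ :=
  sInf { x | ∃ F : Frame M, ∃ w : Sym2 F.V → ℝ, F.IsFilling w ρ ∧ F.weight w = x }

/-- A minimal filling: a filling whose weight equals `mf(M,ρ)`. -/
def IsMinFilling {M : Type} (F : Frame M) (w : Sym2 F.V → ℝ) (ρ : M → M → ℝ) : Prop :=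
  F.IsFilling w ρ ∧ F.weight w = mf ρ

/-- A cyclic order on `M`: a permutation acting transitively (a single cycle through all of `M`). -/
def IsCyclicOrder {M : Type} (π : Equiv.Perm M) : Prop :=
  ∀ p q : M, ∃ n : ℕ, (π ^ n) p = q

namespace Frame

variable {M : Type}

/-- The part of `M` lying, after removal of the edge `s(u,v)`, in the component of `u`. -/
def sideM (F : Frame M) (u v : F.V) : Set M :=
  { p : M | (F.G.deleteEdges {s(u, v)}).Reachable (F.ι p) u }

/-- `π` is a tour of `G` (a planar order): a cyclic order such that for every edge and
each part of the induced partition of `M` there is exactly one point leaving the part. -/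
def IsTour (F : Frame M) (π : Equiv.Perm M) : Prop :=
  IsCyclicOrder π ∧
  ∀ u v : F.V, F.G.Adj u v →
    ∃! p : M, p ∈ F.sideM u v ∧ π p ∉ F.sideM u v

end Frame

/-- The half-perimeter of `(M, ρ)` with respect to a cyclic order `π`. -/
noncomputable def halfPerim {M : Type} [Fintype M] (ρ : M → M → ℝ) (π : Equiv.Perm M) : ℝ :=
  (∑ p : M, ρ p (π p)) / 2

/-- The half-perimeter of the space: the minimum over all cyclic orders. -/
noncomputable def halfPerimSpace {M : Type} [Fintype M] (ρ : M → M → ℝ) : ℝ :=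
  sInf { x | ∃ σ : Equiv.Perm M, IsCyclicOrder σ ∧ x = halfPerim ρ σ }

/-!
Removing an edge `e` of the tree splits `M` in two, and the tour `π` leaves each part exactly once,
so exactly two of the steps `p ↦ π p` have `e` on the tree path from `p` to `π p`. Summing
`ρ p (π p) ≤ d_ω(p, π p)` over `p` therefore counts every edge weight exactly twice.

For the second claim, a depth-first walk around the tree visits all of `M` and passes every edge at
most twice. Listing the points of `M` along it, each once, gives a cyclic order whose perimeter is,
by the triangle inequality for `d_ω`, at most the length of the walk, hence at most `2 ω(G)`. A star
with large constant weights shows that fillings exist, so the infimum `mf` is over a nonempty set.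
-/

section ChainCost

variable {α : Type*} {d : α → α → ℝ}

variable (d) in
def chainCost : α → List α → α → ℝ
  | a, [], b => d a b
  | a, x :: l, b => d a x + chainCost x l b

variable (d) in
lemma sum_zipWith_cons_append_singleton (a b : α) (l : List α) :
    (List.zipWith d (a :: l) (l ++ [b])).sum = chainCost d a l b := by
  induction l generalizing a with
  | nil => simp [chainCost]
  | cons x l ih => simp [chainCost, ← ih]

lemma chainCost_le_add_chainCost (htri : ∀ a b c, d a c ≤ d a b + d b c) (a x b : α)
    (l : List α) : chainCost d a l b ≤ d a x + chainCost d x l b := by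
  cases l with
  | nil => exact htri a x b
  | cons y l => simp only [chainCost]; linarith [htri a x y]

lemma chainCost_le_chainCost_add (htri : ∀ a b c, d a c ≤ d a b + d b c) (a x b : α)
    (l : List α) : chainCost d a l b ≤ chainCost d a l x + d x b := by
  induction l generalizing a with
  | nil => exact htri a x b
  | cons y l ih => simp only [chainCost]; linarith [ih y]

lemma List.Sublist.chainCost_le (htri : ∀ a b c, d a c ≤ d a b + d b c) {l₁ l₂ : List α}
    (h : l₁.Sublist l₂) (a b : α) : chainCost d a l₁ b ≤ chainCost d a l₂ b := by
  induction h generalizing a with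
  | slnil => exact le_rfl
  | cons x _ ih =>
    exact (ih a).trans (chainCost_le_add_chainCost htri a x b _)
  | cons_cons x _ ih => simp only [chainCost]; linarith [ih x]

lemma sum_zipWith_rotate_one_le_chainCost (htri : ∀ a b c, d a c ≤ d a b + d b c)
    (l : List α) (r : α) : (List.zipWith d l (l.rotate 1)).sum ≤ chainCost d r l r := by
  cases l with
  | nil => simpa [chainCost] using htri r r r
  | cons x l =>
    rw [List.rotate_cons_succ, List.rotate_zero, sum_zipWith_cons_append_singleton]
    simp only [chainCost]
    linarith [chainCost_le_chainCost_add htri x r x l]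

lemma SimpleGraph.Walk.chainCost_support_le {G : SimpleGraph α}
    (htri : ∀ a b c, d a c ≤ d a b + d b c) (hself : ∀ x, d x x = 0) {c : Sym2 α → ℝ}
    (hadj : ∀ x y, G.Adj x y → d x y ≤ c s(x, y)) {u v : α} (W : G.Walk u v) :
    chainCost d u W.support v ≤ (W.edges.map c).sum := by
  induction W with
  | nil => simp [chainCost, hself]
  | cons h p ih =>
    rw [Walk.support_cons, Walk.edges_cons, List.map_cons, List.sum_cons]
    simp only [chainCost, hself, zero_add]
    exact (chainCost_le_add_chainCost htri _ _ _ _).trans (add_le_add (hadj _ _ h) ih)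

end ChainCost

lemma List.sum_map_le_mul_sum {β : Type*} [DecidableEq β] {l : List β} {s : Finset β}
    {f : β → ℝ} {n : ℕ} (hl : ∀ x ∈ l, x ∈ s) (hf : ∀ x ∈ s, 0 ≤ f x)
    (hcount : ∀ x, l.count x ≤ n) :
    (l.map f).sum ≤ n * ∑ x ∈ s, f x := by
  rw [Finset.sum_list_map_count, Finset.mul_sum]
  calc ∑ x ∈ l.toFinset, l.count x • f x
      ≤ ∑ x ∈ l.toFinset, n * f x := by
        refine Finset.sum_le_sum fun x hx => ?_
        rw [nsmul_eq_mul]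
        exact mul_le_mul_of_nonneg_right (by exact_mod_cast hcount x)
          (hf x (hl x (List.mem_toFinset.mp hx)))
    _ ≤ ∑ x ∈ s, n * f x :=
        Finset.sum_le_sum_of_subset_of_nonneg (fun x hx => hl x (List.mem_toFinset.mp hx))
          fun x hx _ => mul_nonneg (Nat.cast_nonneg n) (hf x hx)

lemma List.map_filterMap_partialInv_sublist {α β : Type*} {f : α → β}
    (hf : Function.Injective f) (L : List β) :
    ((L.filterMap (Function.partialInv f)).map f).Sublist L := by
  induction L with
  | nil => simp
  | cons b L ih =>
    cases h : Function.partialInv f b with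
    | none => simpa [List.filterMap_cons, h] using ih.cons b
    | some a =>
      rw [List.filterMap_cons, h, List.map_cons, hf.isPartialInv a b |>.mp h]
      exact ih.cons_cons b

lemma List.exists_nodup_map_sublist {α β : Type*} [DecidableEq β] {f : α → β}
    (hf : Function.Injective f) {L : List β} (hL : ∀ a, f a ∈ L) :
    ∃ l : List α, l.Nodup ∧ (∀ a, a ∈ l) ∧ (l.map f).Sublist L := by
  refine ⟨L.dedup.filterMap (Function.partialInv f), ?_, fun a => ?_,
    (List.map_filterMap_partialInv_sublist hf _).trans (List.dedup_sublist L)⟩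
  · refine List.Nodup.filterMap (fun b b' a hb hb' => ?_) (List.nodup_dedup L)
    rw [← (hf.isPartialInv a b).mp hb, ← (hf.isPartialInv a b').mp hb']
  · exact List.mem_filterMap.mpr ⟨f a, List.mem_dedup.mpr (hL a), (hf.isPartialInv _ _).mpr rfl⟩

section FormPerm

variable {α : Type*} [DecidableEq α] {l : List α}

lemma List.map_formPerm_eq_rotate_one (hl : l.Nodup) : l.map l.formPerm = l.rotate 1 := by
  rw [← List.pmap_next_eq_rotate_one l hl, ← List.pmap_eq_map (p := (· ∈ l)) (fun _ h => h)]
  exact List.pmap_congr_left _ fun x hx _ _ => List.formPerm_apply_mem_eq_next hl x hx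

lemma List.sum_apply_formPerm [Fintype α] (hl : l.Nodup) (hmem : ∀ a, a ∈ l) (f : α → α → ℝ) :
    ∑ a, f a (l.formPerm a) = (List.zipWith f l (l.rotate 1)).sum := by
  rw [← List.map_formPerm_eq_rotate_one hl, List.zipWith_map_right, List.zipWith_self,
    ← List.sum_toFinset _ hl]
  exact (Finset.sum_congr (Finset.eq_univ_iff_forall.mpr fun a => List.mem_toFinset.mpr (hmem a))
    fun _ _ => rfl).symm

end FormPerm

lemma isCyclicOrder_formPerm {α : Type} [DecidableEq α] {l : List α} (hl : l.Nodup)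
    (hmem : ∀ a, a ∈ l) : IsCyclicOrder l.formPerm := by
  intro p q
  obtain ⟨i, hi, rfl⟩ := List.getElem_of_mem (hmem p)
  obtain ⟨j, hj, rfl⟩ := List.getElem_of_mem (hmem q)
  -- `+ l.length` keeps the natural-number subtraction from truncating when `j < i`
  refine ⟨j + l.length - i, ?_⟩
  rw [List.formPerm_pow_apply_getElem _ hl]
  congr 1
  rw [show i + (j + l.length - i) = j + l.length by omega, Nat.add_mod_right, Nat.mod_eq_of_lt hj]

namespace SimpleGraph

variable {V : Type*} {G : SimpleGraph V}

lemma Walk.reachable_deleteEdges_or {x u v : V} (W : G.Walk x u) :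
    (G.deleteEdges {s(u, v)}).Reachable x u ∨ (G.deleteEdges {s(u, v)}).Reachable x v := by
  induction W with
  | nil => exact Or.inl .rfl
  | @cons x y w h p ih =>
    by_cases he : s(x, y) = s(w, v)
    · rcases Sym2.eq_iff.mp he with ⟨rfl, -⟩ | ⟨rfl, -⟩
      · exact Or.inl .rfl
      · exact Or.inr .rfl
    · have h' : (G.deleteEdges {s(w, v)}).Adj x y := (deleteEdges_adj ..).mpr ⟨h, he⟩
      exact ih.imp h'.reachable.trans h'.reachable.trans

variable [DecidableEq V]

def Walk.IsDFSWalk {r : V} (W : G.Walk r r) : Prop :=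
  (∀ x, G.Reachable r x → x ∈ W.support) ∧ ∀ e, W.edges.count e ≤ 2

lemma Walk.IsDFSWalk.splice {r v : V} (hrv : G.Adj r v)
    (hbr : ¬(G.deleteEdges {s(r, v)}).Reachable r v)
    {Wr : (G.deleteEdges {s(r, v)}).Walk r r} {Wv : (G.deleteEdges {s(r, v)}).Walk v v}
    (hWr : Wr.IsDFSWalk) (hWv : Wv.IsDFSWalk) :
    ((Wr.mapLe (deleteEdges_le _)).append
      (cons hrv ((Wv.mapLe (deleteEdges_le _)).concat hrv.symm))).IsDFSWalk := by
  have hreach : ∀ {a b x} (W : (G.deleteEdges {s(r, v)}).Walk a b), x ∈ W.support →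
      (G.deleteEdges {s(r, v)}).Reachable a x :=
    fun W hx => ⟨W.takeUntil _ hx⟩
  have hnot : ∀ {a b} (W : (G.deleteEdges {s(r, v)}).Walk a b), s(r, v) ∉ W.edges := fun W h => by
    simpa [edgeSet_deleteEdges] using W.edges_subset_edgeSet h
  constructor
  · rintro x ⟨p⟩
    simp only [support_append, support_cons, support_concat, support_mapLe_eq_support,
      List.mem_append, List.tail_cons]
    rcases p.reverse.reachable_deleteEdges_or with h | h
    · exact Or.inl (hWr.1 x h.symm)
    · exact Or.inr (Or.inl (hWv.1 x h.symm))
  · intro e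
    have hdisj : Wr.edges.count e = 0 ∨ Wv.edges.count e = 0 := by
      by_contra! hboth
      induction e using Sym2.ind with
      | _ a b =>
        have hr := Wr.fst_mem_support_of_mem_edges (List.count_pos_iff.mp hboth.1.bot_lt)
        have hv := Wv.fst_mem_support_of_mem_edges (List.count_pos_iff.mp hboth.2.bot_lt)
        exact hbr ((hreach Wr hr).trans (hreach Wv hv).symm)
    simp only [edges_append, edges_cons, edges_concat, edges_mapLe_eq_edges, List.concat_eq_append,
      List.count_append, List.count_cons, List.count_nil, beq_iff_eq, Sym2.eq_swap]
    by_cases he : s(r, v) = e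
    · subst he
      simp [List.count_eq_zero.mpr (hnot Wr), List.count_eq_zero.mpr (hnot Wv)]
    · have := hWr.2 e
      have := hWv.2 e
      simp only [he, if_false]
      omega

theorem IsAcyclic.exists_isDFSWalk [Finite V] (hG : G.IsAcyclic) (r : V) :
    ∃ W : G.Walk r r, W.IsDFSWalk := by
  induction hn : G.edgeSet.ncard using Nat.strong_induction_on generalizing G r with
  | _ n ih =>
  by_cases hr : ∃ v, G.Adj r v
  · obtain ⟨v, hrv⟩ := hr
    have hlt : (G.deleteEdges {s(r, v)}).edgeSet.ncard < n := by
      rw [← hn, edgeSet_deleteEdges]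
      exact Set.ncard_sdiff_singleton_lt_of_mem hrv
    have hG' : (G.deleteEdges {s(r, v)}).IsAcyclic := hG.anti (deleteEdges_le _)
    obtain ⟨Wr, hWr⟩ := ih _ hlt hG' r rfl
    obtain ⟨Wv, hWv⟩ := ih _ hlt hG' v rfl
    exact ⟨_, hWr.splice hrv (isBridge_iff.mp (isAcyclic_iff_forall_adj_isBridge.mp hG hrv)) hWv⟩
  · push Not at hr
    refine ⟨.nil, fun x ⟨p⟩ => ?_, fun e => by simp⟩
    cases p with
    | nil => simp
    | cons h _ => exact absurd h (hr _)

end SimpleGraph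

lemma card_filter_not_mem_iff_mem_eq_two {α : Type*} [Fintype α] [DecidableEq α] (f : α → α)
    (S : Set α) [DecidablePred (· ∈ S)] (hout : ∃! a, a ∈ S ∧ f a ∉ S)
    (hin : ∃! a, a ∈ Sᶜ ∧ f a ∉ Sᶜ) :
    (Finset.univ.filter fun a => ¬(a ∈ S ↔ f a ∈ S)).card = 2 := by
  obtain ⟨a, ha, ha'⟩ := hout
  obtain ⟨b, hb, hb'⟩ := hin
  simp only [Set.mem_compl_iff, not_not] at hb hb'
  refine Finset.card_eq_two.mpr ⟨a, b, fun hab => hb.1 (hab ▸ ha.1), ?_⟩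
  ext x
  simp only [Finset.mem_filter, Finset.mem_univ, true_and, Finset.mem_insert,
    Finset.mem_singleton]
  constructor
  · intro hx
    by_cases hxS : x ∈ S
    · exact Or.inl (ha' x ⟨hxS, by tauto⟩)
    · exact Or.inr (hb' x ⟨hxS, by tauto⟩)
  · rintro (rfl | rfl) <;> tauto

namespace Frame

variable {M : Type} (F : Frame M)

lemma path_isPath (u v : F.V) : (F.path u v).IsPath :=
  (F.tree.existsUnique_path u v).exists.choose_spec

lemma path_eq {u v : F.V} {p : F.G.Walk u v} (hp : p.IsPath) : F.path u v = p :=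
  (F.tree.existsUnique_path u v).unique (F.path_isPath u v) hp

lemma dist_self (w : Sym2 F.V → ℝ) (u : F.V) : F.dist w u u = 0 := by
  simp [dist, F.path_eq Walk.IsPath.nil]

variable {F} {w : Sym2 F.V → ℝ}

lemma dist_le_sum_edges (hw : ∀ e ∈ F.G.edgeFinset, 0 ≤ w e) {a b : F.V} (W : F.G.Walk a b) :
    F.dist w a b ≤ (W.edges.map w).sum := by
  obtain ⟨l, hperm, hsub⟩ := List.subperm_of_subset (W.toPath.2.edges_nodup)
    (Walk.edges_toPath_subset_edges W)
  rw [dist, F.path_eq W.toPath.2, ← (hperm.map w).sum_eq]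
  refine (hsub.map w).sum_le_sum fun x hx => ?_
  obtain ⟨e, he, rfl⟩ := List.mem_map.mp hx
  exact hw e (mem_edgeFinset.mpr (W.edges_subset_edgeSet he))

lemma dist_triangle (hw : ∀ e ∈ F.G.edgeFinset, 0 ≤ w e) (a b c : F.V) :
    F.dist w a c ≤ F.dist w a b + F.dist w b c := by
  simpa [dist] using dist_le_sum_edges hw ((F.path a b).append (F.path b c))

lemma dist_le_of_adj (hw : ∀ e ∈ F.G.edgeFinset, 0 ≤ w e) {x y : F.V} (h : F.G.Adj x y) :
    F.dist w x y ≤ w s(x, y) := by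
  simpa using dist_le_sum_edges hw h.toWalk

lemma dist_eq_sum_edgeFinset (a b : F.V) :
    F.dist w a b = ∑ e ∈ F.G.edgeFinset, if e ∈ (F.path a b).edges then w e else 0 := by
  rw [dist, ← List.sum_toFinset _ (F.path_isPath a b).edges_nodup, ← Finset.sum_filter]
  congr 1
  ext e
  simpa using fun he => (F.path a b).edges_subset_edgeSet he

variable (F) in
lemma edge_mem_path_iff_not_reachable (e : Sym2 F.V) (a b : F.V) :
    e ∈ (F.path a b).edges ↔ ¬(F.G.deleteEdges {e}).Reachable a b := by
  constructor
  · rintro he ⟨p⟩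
    rw [F.path_eq (p.mapLe (deleteEdges_le _)).toPath.2] at he
    have := Walk.edges_toPath_subset_edges _ he
    rw [Walk.edges_mapLe_eq_edges] at this
    simpa [edgeSet_deleteEdges] using p.edges_subset_edgeSet this
  · intro h
    by_contra he
    exact h ⟨(F.path a b).toDeleteEdge e he⟩

lemma mem_sideM_or_reachable {u v : F.V} (p : M) :
    p ∈ F.sideM u v ∨ (F.G.deleteEdges {s(u, v)}).Reachable (F.ι p) v :=
  (F.tree.connected.preconnected (F.ι p) u).elim Walk.reachable_deleteEdges_or

lemma not_reachable_deleteEdges {u v : F.V} (h : F.G.Adj u v) :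
    ¬(F.G.deleteEdges {s(u, v)}).Reachable u v :=
  isBridge_iff.mp (isAcyclic_iff_forall_adj_isBridge.mp F.tree.isAcyclic h)

lemma sideM_swap {u v : F.V} (h : F.G.Adj u v) : F.sideM v u = (F.sideM u v)ᶜ := by
  ext p
  simp only [sideM, Sym2.eq_swap, Set.mem_compl_iff]
  refine ⟨fun hv hu => not_reachable_deleteEdges h (hu.symm.trans hv), fun hu => ?_⟩
  exact (mem_sideM_or_reachable p).resolve_left hu

lemma edge_mem_path_iff_sideM {u v : F.V} (h : F.G.Adj u v) (p q : M) :
    s(u, v) ∈ (F.path (F.ι p) (F.ι q)).edges ↔ ¬(p ∈ F.sideM u v ↔ q ∈ F.sideM u v) := by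
  rw [edge_mem_path_iff_not_reachable, not_iff_not]
  have hbr := not_reachable_deleteEdges h
  refine ⟨fun hpq => ⟨hpq.symm.trans, hpq.trans⟩, fun hiff => ?_⟩
  rcases mem_sideM_or_reachable (u := u) (v := v) p with hp | hp
  · exact hp.trans (hiff.mp hp).symm
  · rcases mem_sideM_or_reachable (u := u) (v := v) q with hq | hq
    · exact absurd ((hiff.mpr hq).symm.trans hp) hbr
    · exact hp.trans hq.symm

lemma IsTour.sum_dist_eq [Fintype M] {π : Equiv.Perm M} (hπ : F.IsTour π) :
    ∑ p, F.dist w (F.ι p) (F.ι (π p)) = 2 * F.weight w := by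
  classical
  simp only [dist_eq_sum_edgeFinset]
  rw [Finset.sum_comm, weight, Finset.mul_sum]
  refine Finset.sum_congr rfl fun e he => ?_
  rw [← Finset.sum_filter, Finset.sum_const, nsmul_eq_mul]
  congr 1
  induction e using Sym2.ind with
  | _ u v =>
    have huv : F.G.Adj u v := mem_edgeFinset.mp he
    simp only [edge_mem_path_iff_sideM huv]
    exact_mod_cast card_filter_not_mem_iff_mem_eq_two π _ (hπ.2 u v huv)
      (F.sideM_swap huv ▸ hπ.2 v u huv.symm)

lemma exists_isCyclicOrder_sum_dist_le [Fintype M] (hw : ∀ e ∈ F.G.edgeFinset, 0 ≤ w e) :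
    ∃ σ : Equiv.Perm M, IsCyclicOrder σ ∧
      ∑ p, F.dist w (F.ι p) (F.ι (σ p)) ≤ 2 * F.weight w := by
  classical
  obtain ⟨r⟩ := F.tree.connected.nonempty
  obtain ⟨W, hcover, hcount⟩ := F.tree.isAcyclic.exists_isDFSWalk r
  obtain ⟨l, hl, hmem, hsub⟩ := List.exists_nodup_map_sublist F.inj (L := W.support)
    fun p => hcover _ (F.tree.connected.preconnected r _)
  have htri := dist_triangle hw
  refine ⟨l.formPerm, isCyclicOrder_formPerm hl hmem, ?_⟩
  calc ∑ p, F.dist w (F.ι p) (F.ι (l.formPerm p))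
      = (List.zipWith (F.dist w) (l.map F.ι) ((l.map F.ι).rotate 1)).sum := by
        rw [l.sum_apply_formPerm hl hmem fun p q => F.dist w (F.ι p) (F.ι q), ← List.map_rotate,
          List.zipWith_map]
    _ ≤ chainCost (F.dist w) r (l.map F.ι) r := sum_zipWith_rotate_one_le_chainCost htri _ _
    _ ≤ chainCost (F.dist w) r W.support r := hsub.chainCost_le htri r r
    _ ≤ (W.edges.map w).sum :=
        W.chainCost_support_le htri (F.dist_self w) fun _ _ h => dist_le_of_adj hw h
    _ ≤ 2 * F.weight w := List.sum_map_le_mul_sum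
        (fun e he => mem_edgeFinset.mpr (W.edges_subset_edgeSet he)) hw hcount

lemma isFilling_const [Fintype M] {ρ : M → M → ℝ} (hρ : IsPseudoMetric ρ) :
    F.IsFilling (fun _ => ∑ p, ∑ q, ρ p q) ρ := by
  set D := ∑ p, ∑ q, ρ p q
  have hD : ∀ p q, ρ p q ≤ D := fun p q =>
    (Finset.single_le_sum (fun q _ => hρ.nonneg p q) (Finset.mem_univ q)).trans
      (Finset.single_le_sum (f := fun p => ∑ q, ρ p q)
        (fun p _ => Finset.sum_nonneg fun q _ => hρ.nonneg p q) (Finset.mem_univ p))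
  have hD0 : 0 ≤ D := Finset.sum_nonneg fun p _ => Finset.sum_nonneg fun q _ => hρ.nonneg p q
  refine ⟨fun _ _ => hD0, fun p q => ?_⟩
  rcases eq_or_ne p q with rfl | hpq
  · rw [hρ.refl, dist_self]
  · have hlen : 1 ≤ (F.path (F.ι p) (F.ι q)).length :=
      Nat.one_le_iff_ne_zero.mpr fun h => hpq (F.inj (Walk.eq_of_length_eq_zero h))
    rw [dist, List.map_const', List.sum_replicate, Walk.length_edges, nsmul_eq_mul]
    exact (hD p q).trans (le_mul_of_one_le_left hD0 (by exact_mod_cast hlen))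

lemma nonempty [Fintype M] : Nonempty (Frame M) := by
  classical
  cases isEmpty_or_nonempty M with
  | inl hM =>
    exact ⟨⟨Unit, ⊥, .of_subsingleton, isEmptyElim, fun a => isEmptyElim a, by simp⟩⟩
  | inr hM =>
    obtain ⟨m⟩ := hM
    exact ⟨⟨M, starGraph m, isTree_starGraph m, id, Function.injective_id, fun v _ => ⟨v, rfl⟩⟩⟩

end Frame

lemma halfPerim_nonneg {M : Type} [Fintype M] {ρ : M → M → ℝ} (hρ : IsPseudoMetric ρ)
    (σ : Equiv.Perm M) : 0 ≤ halfPerim ρ σ :=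
  div_nonneg (Finset.sum_nonneg fun _ _ => hρ.nonneg _ _) zero_le_two

lemma Frame.IsTour.halfPerim_le {M : Type} [Fintype M] {ρ : M → M → ℝ} {F : Frame M}
    {w : Sym2 F.V → ℝ} (hf : F.IsFilling w ρ) {π : Equiv.Perm M} (hπ : F.IsTour π) :
    halfPerim ρ π ≤ F.weight w := by
  have hle : ∑ p, ρ p (π p) ≤ ∑ p, F.dist w (F.ι p) (F.ι (π p)) :=
    Finset.sum_le_sum fun p _ => hf.2 p (π p)
  rw [halfPerim, div_le_iff₀ two_pos]
  linarith [hπ.sum_dist_eq (w := w)]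

lemma Frame.IsFilling.exists_isCyclicOrder_halfPerim_le {M : Type} [Fintype M]
    {ρ : M → M → ℝ} {F : Frame M} {w : Sym2 F.V → ℝ} (hf : F.IsFilling w ρ) :
    ∃ σ : Equiv.Perm M, IsCyclicOrder σ ∧ halfPerim ρ σ ≤ F.weight w := by
  obtain ⟨σ, hσ, hle⟩ := F.exists_isCyclicOrder_sum_dist_le hf.1
  have hρle : ∑ p, ρ p (σ p) ≤ ∑ p, F.dist w (F.ι p) (F.ι (σ p)) :=
    Finset.sum_le_sum fun p _ => hf.2 p (σ p)
  exact ⟨σ, hσ, by rw [halfPerim, div_le_iff₀ two_pos]; linarith⟩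

theorem stmt6 {M : Type} [Fintype M] (ρ : M → M → ℝ) (hρ : IsPseudoMetric ρ) :
    (∀ (F : Frame M) (w : Sym2 F.V → ℝ), F.IsFilling w ρ →
      ∀ π : Equiv.Perm M, F.IsTour π → halfPerim ρ π ≤ F.weight w) ∧
    halfPerimSpace ρ ≤ mf ρ := by
  refine ⟨fun F w hf π hπ => hπ.halfPerim_le hf, ?_⟩
  obtain ⟨F⟩ := Frame.nonempty (M := M)
  refine le_csInf ⟨_, F, _, F.isFilling_const hρ, rfl⟩ ?_
  rintro _ ⟨F, w, hf, rfl⟩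
  obtain ⟨σ, hσ, hle⟩ := hf.exists_isCyclicOrder_halfPerim_le
  have hbdd : BddBelow {x | ∃ σ : Equiv.Perm M, IsCyclicOrder σ ∧ x = halfPerim ρ σ} :=
    ⟨0, by rintro _ ⟨σ, -, rfl⟩; exact halfPerim_nonneg hρ σ⟩
  exact (csInf_le hbdd ⟨σ, hσ, rfl⟩).trans hle
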